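/- arXiv:1703.02703 — 5 statements merged into one kernel-verified Lean document; each statement's English description precedes it below -/
import Mathlib

section
/- Let S = k[x_0,...,x_n] and let I_m ⊆ S_m be spanned by an initial revlex segment of degree m monomials containing x_{n-1}^m. Then codim_{S_{m+1}}(S_1·I_m) = codim_{S_m}(I_m), i.e., the number of degree m monomials not in I_m equals the number of degree m+1 monomials not in S_1·I_m. -/
/-!
Multiplication by `x_n` is a bijection from the degree-`m` monomials outside the segment onto
the degree-`(m + 1)` monomials outside `S_1 · I_m`; as monomials are linearly independent, both
codimensions are these counts. The image avoids `S_1 · I_m`: if `x^α x_n = x_i x^μ` with `i ≠ n`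
and `x^μ` in the segment, then `μ` has the larger exponent of `x_n`, so `x^α ≻ x^μ` and `x^α` is
in the segment too. The map is onto: every degree-`m` monomial not involving `x_n` is
`≽ x_{n-1}^m`, hence in the segment, so every degree-`(m + 1)` monomial outside `S_1 · I_m` is
divisible by `x_n`.
-/

open MvPolynomial

/-- `RevLexGt α β` means `x^α ≻ x^β` in the degree reverse lexicographic order. -/
def RevLexGt {N : ℕ} (α β : Fin N →₀ ℕ) : Prop :=
  ∃ i, α i < β i ∧ ∀ j, i < j → α j = β j

/-- `W` is an initial revlex segment in degree `m`. -/
def IsRevLexSegment {N : ℕ} (m : ℕ) (W : Set (Fin N →₀ ℕ)) : Prop :=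
  (∀ α ∈ W, ∑ i, α i = m) ∧
  ∀ α β : Fin N →₀ ℕ, (∑ i, α i = m) → β ∈ W → RevLexGt α β → α ∈ W

open Module Submodule

theorem Finsupp.eq_of_le_of_degree_eq {σ : Type*} {f g : σ →₀ ℕ} (hle : f ≤ g)
    (hdeg : g.degree = f.degree) : f = g := by
  obtain ⟨d, rfl⟩ := exists_add_of_le hle
  rw [map_add, add_eq_left, degree_eq_zero_iff] at hdeg
  rw [hdeg, add_zero]

theorem Finsupp.degree_sub_single_one_add_one {σ : Type*} {ν : σ →₀ ℕ} {j : σ} (h : ν j ≠ 0) :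
    (ν - single j 1).degree + 1 = ν.degree := by
  simpa using congrArg degree (sub_add_single_one_cancel h)

theorem finrank_span_monomial_image {σ k : Type*} [CommRing k] [Nontrivial k]
    (s : Set (σ →₀ ℕ)) :
    finrank k (span k ((fun ν => (monomial ν (1 : k) : MvPolynomial σ k)) '' s)) = s.ncard := by
  have hli : LinearIndependent k fun ν => (monomial ν (1 : k) : MvPolynomial σ k) := by
    simpa only [coe_basisMonomials] using (basisMonomials σ k).linearIndependent
  rw [Set.ncard_def, ← toENat_rank_span_set (hli.linearIndepOn s), finrank,
    Cardinal.toNat_toENat]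

theorem homogeneousSubmodule_eq_span_monomial {σ k : Type*} [CommSemiring k] (m : ℕ) :
    homogeneousSubmodule σ k m =
      span k ((fun ν => (monomial ν (1 : k) : MvPolynomial σ k)) '' {d | d.degree = m}) := by
  rw [homogeneousSubmodule_eq_finsupp_supported, AddMonoidAlgebra.supported_eq_span_single]
  rfl

def upShadow {σ : Type*} (W : Set (σ →₀ ℕ)) : Set (σ →₀ ℕ) :=
  {ν | ∃ i, ∃ μ ∈ W, ν = μ + Finsupp.single i 1}

theorem upShadow_subset_setOf_degree_eq {σ : Type*} {W : Set (σ →₀ ℕ)} {m : ℕ}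
    (hW : W ⊆ {d | d.degree = m}) : upShadow W ⊆ {d | d.degree = m + 1} := by
  rintro _ ⟨i, μ, hμ, rfl⟩
  have hμ' : μ.degree = m := hW hμ
  simp [hμ']

theorem setOf_X_mul_monomial_eq_image_upShadow {σ k : Type*} [CommSemiring k]
    (W : Set (σ →₀ ℕ)) :
    {p : MvPolynomial σ k | ∃ (i : σ) (μ : σ →₀ ℕ), μ ∈ W ∧ p = X i * monomial μ 1} =
      (fun ν => (monomial ν (1 : k) : MvPolynomial σ k)) '' upShadow W := by
  ext p
  simp only [upShadow, X, monomial_mul, one_mul, Set.mem_image, Set.mem_ofPred_eq]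
  constructor
  · rintro ⟨i, μ, hμ, rfl⟩
    exact ⟨_, ⟨i, μ, hμ, rfl⟩, by rw [add_comm]⟩
  · rintro ⟨_, ⟨i, μ, hμ, rfl⟩, rfl⟩
    exact ⟨i, μ, hμ, by rw [add_comm]⟩

theorem revLexGt_of_apply_last_lt {n : ℕ} {α β : Fin (n + 1) →₀ ℕ}
    (h : α (Fin.last n) < β (Fin.last n)) : RevLexGt α β :=
  ⟨Fin.last n, h, fun j hj => absurd hj (Fin.le_last j).not_gt⟩

namespace IsRevLexSegment

variable {n m : ℕ} {W : Set (Fin (n + 1) →₀ ℕ)} {i : Fin (n + 1)}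

theorem subset_setOf_degree_eq (hW : IsRevLexSegment m W) : W ⊆ {d | d.degree = m} :=
  fun α hα => (Finsupp.degree_eq_sum α).trans (hW.1 α hα)

theorem mem_of_degree_eq (hW : IsRevLexSegment m W) {α β : Fin (n + 1) →₀ ℕ}
    (hα : α.degree = m) (hβ : β ∈ W) (hgt : RevLexGt α β) : α ∈ W :=
  hW.2 α β ((Finsupp.degree_eq_sum α).symm.trans hα) hβ hgt

theorem mem_of_apply_last_eq_zero (hW : IsRevLexSegment m W) (hi : n ≤ (i : ℕ) + 1)
    (hx : Finsupp.single i m ∈ W) {α : Fin (n + 1) →₀ ℕ} (hα : α.degree = m)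
    (hlast : α (Fin.last n) = 0) : α ∈ W := by
  by_cases hle : m ≤ α i
  · have : Finsupp.single i m = α :=
      Finsupp.eq_of_le_of_degree_eq (Finsupp.single_le_iff.mpr hle) (by simp [hα])
    exact this ▸ hx
  · refine hW.mem_of_degree_eq hα hx ⟨i, by simpa using hle, fun j hj => ?_⟩
    obtain rfl : j = Fin.last n := Fin.ext <| by
      have := j.isLt
      rw [Fin.lt_def] at hj
      simp only [Fin.val_last]
      omega
    rw [hlast, Finsupp.single_eq_of_ne hj.ne']

theorem mem_upShadow_of_apply_last_eq_zero (hW : IsRevLexSegment m W) (hi : n ≤ (i : ℕ) + 1)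
    (hx : Finsupp.single i m ∈ W) {ν : Fin (n + 1) →₀ ℕ} (hν : ν.degree = m + 1)
    (hlast : ν (Fin.last n) = 0) : ν ∈ upShadow W := by
  obtain ⟨j, hj⟩ : ∃ j, ν j ≠ 0 := (Finsupp.ne_iff (g := 0)).mp fun h => by simp [h] at hν
  refine ⟨j, ν - Finsupp.single j 1, hW.mem_of_apply_last_eq_zero hi hx ?_ ?_,
    (Finsupp.sub_add_single_one_cancel hj).symm⟩
  · have := Finsupp.degree_sub_single_one_add_one hj
    omega
  · simp [hlast]

theorem mem_of_add_single_last_mem_upShadow (hW : IsRevLexSegment m W)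
    {α : Fin (n + 1) →₀ ℕ} (hα : α.degree = m)
    (h : α + Finsupp.single (Fin.last n) 1 ∈ upShadow W) : α ∈ W := by
  obtain ⟨j, μ, hμ, heq⟩ := h
  by_cases hj : j = Fin.last n
  · subst hj
    rwa [add_left_injective _ heq]
  · refine hW.mem_of_degree_eq hα hμ (revLexGt_of_apply_last_lt ?_)
    have := DFunLike.congr_fun heq (Fin.last n)
    simp only [Finsupp.add_apply, Finsupp.single_eq_same, Finsupp.single_eq_of_ne' hj] at this
    omega

theorem image_add_single_last_diff (hW : IsRevLexSegment m W) (hi : n ≤ (i : ℕ) + 1)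
    (hx : Finsupp.single i m ∈ W) :
    (· + Finsupp.single (Fin.last n) 1) '' ({d | d.degree = m} \ W) =
      {d | d.degree = m + 1} \ upShadow W := by
  ext ν
  constructor
  · rintro ⟨α, ⟨hα, hαW⟩, rfl⟩
    exact ⟨by simpa using hα, fun h => hαW (hW.mem_of_add_single_last_mem_upShadow hα h)⟩
  · rintro ⟨hν : ν.degree = m + 1, hνW⟩
    have hlast : ν (Fin.last n) ≠ 0 :=
      fun h => hνW (hW.mem_upShadow_of_apply_last_eq_zero hi hx hν h)
    have hdiv := Finsupp.sub_add_single_one_cancel hlast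
    refine ⟨_, ⟨?_, fun h => hνW ⟨Fin.last n, _, h, hdiv.symm⟩⟩, hdiv⟩
    have := Finsupp.degree_sub_single_one_add_one hlast
    change _ = m
    omega

end IsRevLexSegment

/-- Lemma 5.1(2): if `I_m` is spanned by an initial revlex segment containing `x_{n-1}^m`,
then the codimension of `S_1 · I_m` in `S_{m+1}` equals the codimension of `I_m` in `S_m`. -/
theorem stmt1 {k : Type*} [Field k] (n m : ℕ)
    (W : Set (Fin (n + 1) →₀ ℕ)) (hW : IsRevLexSegment m W)
    (hx : Finsupp.single (⟨n - 1, by omega⟩ : Fin (n + 1)) m ∈ W) :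
    Module.finrank k (homogeneousSubmodule (Fin (n + 1)) k (m + 1)) -
      Module.finrank k (Submodule.span k {p : MvPolynomial (Fin (n + 1)) k |
        ∃ (i : Fin (n + 1)) (μ : Fin (n + 1) →₀ ℕ), μ ∈ W ∧ p = X i * monomial μ 1}) =
    Module.finrank k (homogeneousSubmodule (Fin (n + 1)) k m) -
      Module.finrank k (Submodule.span k
        ((fun ν => (monomial ν (1 : k) : MvPolynomial (Fin (n + 1)) k)) '' W)) := by
  have hWsub := hW.subset_setOf_degree_eq
  rw [homogeneousSubmodule_eq_span_monomial, homogeneousSubmodule_eq_span_monomial,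
    setOf_X_mul_monomial_eq_image_upShadow, finrank_span_monomial_image,
    finrank_span_monomial_image, finrank_span_monomial_image, finrank_span_monomial_image,
    ← Set.ncard_sdiff' (upShadow_subset_setOf_degree_eq hWsub)
      (Finsupp.finite_of_degree_eq _),
    ← Set.ncard_sdiff' hWsub (Finsupp.finite_of_degree_eq _),
    ← hW.image_add_single_last_diff (by dsimp; omega) hx]
  exact Set.ncard_image_of_injective _ (add_left_injective _)
end

section
/- Let W be an initial revlex segment of degree m monomials in k[x_0,...,x_n] containing x_{n-1}^m, with least element μ. Then a degree m+1 monomial μ' does not lie in the set of products {x_i·ν : ν ∈ W, 0 ≤ i ≤ n} if and only if μ' ≺ x_n·μ in the revlex order; moreover every such μ' is divisible by x_n. -/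
open Finsupp

theorem eq_tsub_single_add_single {ι : Type*} {α : ι →₀ ℕ} {i : ι} (h : α i ≠ 0) :
    α = (α - single i 1) + single i 1 :=
  (tsub_add_cancel_of_le (single_le_iff.2 (Nat.pos_of_ne_zero h))).symm

theorem sum_tsub_single_eq {ι : Type*} [Fintype ι] {α : ι →₀ ℕ} {i : ι} {m : ℕ} (h : α i ≠ 0)
    (hdeg : ∑ j, α j = m + 1) : ∑ j, (α - single i 1 : ι →₀ ℕ) j = m := by
  rw [eq_tsub_single_add_single h] at hdeg
  simpa [Finset.sum_add_distrib] using hdeg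

theorem toColex_le_toColex_single {ι : Type*} [LinearOrder ι] [Fintype ι] {α : ι →₀ ℕ} {p : ι}
    {m : ℕ} (hdeg : ∑ j, α j = m) (hα : ∀ j, p < j → α j = 0) :
    toColex α ≤ toColex (single p m) := by
  have hp : α p ≤ m := hdeg ▸ Finset.single_le_sum (fun j _ => Nat.zero_le (α j))
    (Finset.mem_univ p)
  rcases hp.lt_or_eq with hlt | heq
  · exact le_of_lt ⟨p, fun j hj => by simp [hα j hj, hj.ne], by simpa using hlt⟩
  · have hrest : ∑ j ∈ Finset.univ.erase p, α j = 0 := by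
      have := Finset.add_sum_erase Finset.univ α (Finset.mem_univ p)
      omega
    have hsingle : α = single p m := by
      refine eq_single_iff.2 ⟨fun j hj => Finset.mem_singleton.2 ?_, heq⟩
      by_contra hjp
      exact mem_support_iff.1 hj <| Finset.sum_eq_zero_iff.1 hrest j
        (Finset.mem_erase.2 ⟨hjp, Finset.mem_univ j⟩)
    rw [hsingle]

def upperShadow {ι : Type*} (W : Set (ι →₀ ℕ)) : Set (ι →₀ ℕ) :=
  {μ' | ∃ i ν, ν ∈ W ∧ μ' = ν + single i 1}

theorem revLexGt_iff_toColex_lt {N : ℕ} {α β : Fin N →₀ ℕ} :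
    RevLexGt α β ↔ toColex α < toColex β :=
  exists_congr fun _ => and_comm

theorem IsRevLexSegment.mem_of_toColex_le {N m : ℕ} {W : Set (Fin N →₀ ℕ)}
    (hW : IsRevLexSegment m W) {α β : Fin N →₀ ℕ} (hdeg : ∑ i, α i = m) (hβ : β ∈ W)
    (hle : toColex α ≤ toColex β) : α ∈ W := by
  rcases hle.eq_or_lt with heq | hlt
  · rwa [toColex_inj.1 heq]
  · exact hW.2 α β hdeg hβ (revLexGt_iff_toColex_lt.2 hlt)

theorem IsRevLexSegment.mem_upperShadow_of_forall_lt_eq_zero {N m : ℕ} {W : Set (Fin N →₀ ℕ)}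
    (hW : IsRevLexSegment m W) {p : Fin N} (hp : single p m ∈ W) {μ' : Fin N →₀ ℕ}
    (hdeg : ∑ i, μ' i = m + 1) (hvanish : ∀ j, p < j → μ' j = 0) : μ' ∈ upperShadow W := by
  obtain ⟨i, -, hi⟩ := Finset.exists_ne_zero_of_sum_ne_zero (hdeg.trans_ne m.succ_ne_zero)
  have hνdeg := sum_tsub_single_eq hi hdeg
  refine ⟨i, _, hW.mem_of_toColex_le hνdeg hp (toColex_le_toColex_single hνdeg fun j hj => ?_),
    eq_tsub_single_add_single hi⟩
  simp [hvanish j hj]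

theorem toColex_add_single_le_of_le {n : ℕ} {ν μ : Fin (n + 1) →₀ ℕ}
    (hle : toColex ν ≤ toColex μ) (i : Fin (n + 1)) :
    toColex (ν + single i 1) ≤ toColex (μ + single (Fin.last n) 1) :=
  calc toColex (ν + single i 1)
      ≤ toColex (ν + single (Fin.last n) 1) :=
        add_le_add_right (Colex.single_le_iff.2 (Fin.le_last i)) (toColex ν)
    _ ≤ toColex (μ + single (Fin.last n) 1) := add_le_add_left hle _

theorem IsRevLexSegment.mem_upperShadow_of_toColex_le {n m : ℕ} {W : Set (Fin (n + 1) →₀ ℕ)}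
    (hW : IsRevLexSegment m W) {μ μ' : Fin (n + 1) →₀ ℕ}
    (hμW : μ ∈ W) (hdeg : ∑ i, μ' i = m + 1) (hlast : μ' (Fin.last n) ≠ 0)
    (hle : toColex μ' ≤ toColex (μ + single (Fin.last n) 1)) : μ' ∈ upperShadow W := by
  have hsplit := eq_tsub_single_add_single hlast
  rw [hsplit] at hle
  exact ⟨Fin.last n, _, hW.mem_of_toColex_le (sum_tsub_single_eq hlast hdeg) hμW
    (le_of_add_le_add_right hle), hsplit⟩

/-- For an initial revlex segment `W` of degree `m` monomials containing `x_{n-1}^m`,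
with least element `μ`: a degree `m+1` monomial `μ'` fails to be a product `x_i · ν`
with `ν ∈ W` if and only if `μ' ≺ x_n · μ`; moreover every such `μ'` is divisible by `x_n`. -/
theorem stmt2 (n m : ℕ) (hn : 1 ≤ n) (W : Set (Fin (n + 1) →₀ ℕ))
    (hW : IsRevLexSegment m W)
    (hx : Finsupp.single (⟨n - 1, by omega⟩ : Fin (n + 1)) m ∈ W)
    (μ : Fin (n + 1) →₀ ℕ) (hμW : μ ∈ W)
    (hleast : ∀ ν ∈ W, ν ≠ μ → RevLexGt ν μ)
    (μ' : Fin (n + 1) →₀ ℕ) (hdeg : ∑ i, μ' i = m + 1) :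
    ((¬ ∃ (i : Fin (n + 1)) (ν : Fin (n + 1) →₀ ℕ), ν ∈ W ∧ μ' = ν + Finsupp.single i 1) ↔
        RevLexGt (μ + Finsupp.single (Fin.last n) 1) μ') ∧
      ((¬ ∃ (i : Fin (n + 1)) (ν : Fin (n + 1) →₀ ℕ), ν ∈ W ∧ μ' = ν + Finsupp.single i 1) →
        0 < μ' (Fin.last n)) := by
  change (μ' ∉ upperShadow W ↔ _) ∧ (μ' ∉ upperShadow W → _)
  have hmax : ∀ ν ∈ W, toColex ν ≤ toColex μ := fun ν hν => by
    rcases eq_or_ne ν μ with rfl | hne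
    · exact le_rfl
    · exact (revLexGt_iff_toColex_lt.1 (hleast ν hν hne)).le
  have hcorner : μ' (Fin.last n) = 0 → μ' ∈ upperShadow W := fun hlast =>
    hW.mem_upperShadow_of_forall_lt_eq_zero hx hdeg fun j hj => by
      have hjn : n - 1 < (j : ℕ) := hj
      obtain rfl : j = Fin.last n := Fin.ext (by rw [Fin.val_last]; omega)
      exact hlast
  have hshadow : μ' ∈ upperShadow W ↔ toColex μ' ≤ toColex (μ + single (Fin.last n) 1) := by
    refine ⟨fun ⟨i, ν, hν, hμ'⟩ => hμ' ▸ toColex_add_single_le_of_le (hmax ν hν) i, fun hle => ?_⟩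
    by_cases hlast : μ' (Fin.last n) = 0
    · exact hcorner hlast
    · exact hW.mem_upperShadow_of_toColex_le hμW hdeg hlast hle
  exact ⟨by rw [hshadow, not_le, revLexGt_iff_toColex_lt],
    fun hnot => Nat.pos_of_ne_zero (mt hcorner hnot)⟩
end

section
/- Let J be a graded ideal of S = k[x_0,...,x_n] such that J_{m'} ≠ 0 for some m' < m and J_m is spanned by an initial revlex segment of degree m monomials. Then x_{n-1}^m ∈ J_m, and consequently dim_k S_{m+l} − dim_k (S_l·J_m) = dim_k S_m − dim_k J_m for all l ≥ 0. -/
/-!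
Multiplying a nonzero element of `J_{m'}` by `x_n^{m-m'}` gives a nonzero element of `J_m`, so the
segment `W` spanning `J_m` contains a monomial divisible by `x_n`. In revlex order every degree-`m`
monomial not divisible by `x_n` beats it, so `W` contains all of them, `x_{n-1}^m` in particular.
Consequently a degree-`(m+l)` monomial `γ` lies outside `S_l·J_m` exactly when `γ = β·x_n^l` with
`β ∉ W` of degree `m`: if the exponent of `x_n` in `γ` is below `l`, deleting `x_n` from `γ` leaves
a divisor of degree `≥ m`, hence one in `W`; conversely a divisor in `W` of `β·x_n^l` either has a
larger `x_n`-exponent than `β`, forcing `β ∈ W` by the segment property, or divides `β`.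
-/

open MvPolynomial

noncomputable instance {k : Type*} [CommRing k] {n : ℕ} :
    GradedAlgebra (homogeneousSubmodule (Fin (n + 1)) k) :=
  MvPolynomial.gradedAlgebra

open scoped Pointwise

namespace Finsupp

variable {σ : Type*}

lemma eq_of_le_of_degree_eq_s6 {ν β : σ →₀ ℕ} (hle : ν ≤ β) (hdeg : ν.degree = β.degree) :
    ν = β := by
  obtain ⟨δ, rfl⟩ := le_iff_exists_add.mp hle
  simp_all [degree_eq_zero_iff]

lemma mem_degree_add_of_le {m l : ℕ} {W : Set (σ →₀ ℕ)} (hW : W ⊆ {α | α.degree = m})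
    {ν γ : σ →₀ ℕ} (hν : ν ∈ W) (hle : ν ≤ γ) (hγ : γ.degree = m + l) :
    γ ∈ {α : σ →₀ ℕ | α.degree = l} + W := by
  obtain ⟨δ, rfl⟩ := le_iff_exists_add.mp hle
  refine ⟨δ, ?_, ν, hν, add_comm _ _⟩
  have hνm : ν.degree = m := hW hν
  simp only [Set.mem_ofPred_eq, map_add, hνm] at hγ ⊢
  omega

end Finsupp

section RevLex

variable {n m : ℕ} {W : Set (Fin (n + 1) →₀ ℕ)}

lemma revLexGt_of_lt_last {α β : Fin (n + 1) →₀ ℕ} (h : α (Fin.last n) < β (Fin.last n)) :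
    RevLexGt α β :=
  ⟨Fin.last n, h, fun j hj => absurd hj (Fin.le_last j).not_gt⟩

namespace IsRevLexSegment

lemma subset_degree (hW : IsRevLexSegment m W) : W ⊆ {α | α.degree = m} :=
  fun α hα => (Finsupp.degree_eq_sum α).trans (hW.1 α hα)

lemma mem_of_lt_last (hW : IsRevLexSegment m W) {α β : Fin (n + 1) →₀ ℕ}
    (hα : α.degree = m) (hβ : β ∈ W) (h : α (Fin.last n) < β (Fin.last n)) : α ∈ W :=
  hW.2 α β (by rwa [← Finsupp.degree_eq_sum]) hβ (revLexGt_of_lt_last h)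

variable {β₀ : Fin (n + 1) →₀ ℕ}

lemma mem_degree_add_of_last_le (hW : IsRevLexSegment m W) (hβ₀ : β₀ ∈ W)
    (hβ₀last : β₀ (Fin.last n) ≠ 0) {l : ℕ} {γ : Fin (n + 1) →₀ ℕ} (hγ : γ.degree = m + l)
    (hlast : γ (Fin.last n) ≤ l) : γ ∈ {α : Fin (n + 1) →₀ ℕ | α.degree = l} + W := by
  have hsplit := congrArg Finsupp.degree (γ.erase_add_single (Fin.last n))
  simp only [map_add, Finsupp.degree_single] at hsplit
  obtain ⟨ν, hνle, hν⟩ := Finsupp.exists_le_degree_eq (γ.erase (Fin.last n)) m (by omega)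
  have hνlast : ν (Fin.last n) = 0 := by simpa using hνle (Fin.last n)
  have hνW : ν ∈ W := hW.mem_of_lt_last hν hβ₀ (by omega)
  have hνγ : ν ≤ γ := hνle.trans (le_self_add.trans_eq (γ.erase_add_single _))
  exact Finsupp.mem_degree_add_of_le hW.subset_degree hνW hνγ hγ

lemma notMem_degree_add_of_notMem (hW : IsRevLexSegment m W) {l : ℕ}
    {β : Fin (n + 1) →₀ ℕ} (hβ : β.degree = m) (hβW : β ∉ W) :
    β + Finsupp.single (Fin.last n) l ∉ {α : Fin (n + 1) →₀ ℕ | α.degree = l} + W := by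
  rintro ⟨lam, -, ν, hν, hsum⟩
  have hνle : ν ≤ β + Finsupp.single (Fin.last n) l := hsum ▸ le_add_self
  by_cases hlast : ν (Fin.last n) ≤ β (Fin.last n)
  · have hνβ : ν ≤ β := fun i => by
      by_cases hi : i = Fin.last n
      · exact hi ▸ hlast
      · simpa [Finsupp.single_eq_of_ne hi] using hνle i
    have hνdeg : ν.degree = β.degree := by rw [hW.subset_degree hν, hβ]
    exact hβW (Finsupp.eq_of_le_of_degree_eq_s6 hνβ hνdeg ▸ hν)
  · exact hβW (hW.mem_of_lt_last hβ hν (by omega))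

lemma degree_diff_degree_add_eq_image (hW : IsRevLexSegment m W) (hβ₀ : β₀ ∈ W)
    (hβ₀last : β₀ (Fin.last n) ≠ 0) (l : ℕ) :
    {γ : Fin (n + 1) →₀ ℕ | γ.degree = m + l} \ ({α | α.degree = l} + W) =
      (· + Finsupp.single (Fin.last n) l) '' ({α | α.degree = m} \ W) := by
  ext γ
  constructor
  · rintro ⟨hγ, hγW⟩
    have hl : l ≤ γ (Fin.last n) := by
      by_contra h
      exact hγW (hW.mem_degree_add_of_last_le hβ₀ hβ₀last hγ (by omega))
    obtain ⟨β, rfl⟩ := le_iff_exists_add.mp (Finsupp.single_le_iff.mpr hl)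
    have hβ : β.degree = m := by
      simp only [Set.mem_ofPred_eq, map_add, Finsupp.degree_single] at hγ
      omega
    refine ⟨β, ⟨hβ, fun hβW => hγW ?_⟩, add_comm _ _⟩
    exact Finsupp.mem_degree_add_of_le hW.subset_degree hβW le_add_self hγ
  · rintro ⟨β, ⟨hβ : β.degree = m, hβW⟩, rfl⟩
    refine ⟨?_, hW.notMem_degree_add_of_notMem hβ hβW⟩
    rw [Set.mem_ofPred_eq, map_add, Finsupp.degree_single, hβ]

lemma ncard_degree_sub_ncard_degree_add (hW : IsRevLexSegment m W) (hβ₀ : β₀ ∈ W)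
    (hβ₀last : β₀ (Fin.last n) ≠ 0) (l : ℕ) :
    {γ : Fin (n + 1) →₀ ℕ | γ.degree = m + l}.ncard -
        ({α : Fin (n + 1) →₀ ℕ | α.degree = l} + W).ncard =
      {α : Fin (n + 1) →₀ ℕ | α.degree = m}.ncard - W.ncard := by
  have hprod : {α : Fin (n + 1) →₀ ℕ | α.degree = l} + W ⊆ {γ | γ.degree = m + l} := by
    rintro _ ⟨lam, hlam : lam.degree = l, ν, hν, rfl⟩
    have hνm : ν.degree = m := hW.subset_degree hν
    rw [Set.mem_ofPred_eq, map_add, hlam, hνm, add_comm]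
  rw [← Set.ncard_sdiff hprod ((Finsupp.finite_of_degree_eq _).subset hprod),
    ← Set.ncard_sdiff hW.subset_degree ((Finsupp.finite_of_degree_eq m).subset hW.subset_degree),
    hW.degree_diff_degree_add_eq_image hβ₀ hβ₀last l,
    Set.ncard_image_of_injective _ (add_left_injective _)]

end IsRevLexSegment

end RevLex

namespace MvPolynomial

variable {σ R : Type*} [CommSemiring R]

lemma homogeneousSubmodule_eq_restrictSupport (d : ℕ) :
    homogeneousSubmodule σ R d = restrictSupport R {α | α.degree = d} :=
  homogeneousSubmodule_eq_finsupp_supported σ R d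

lemma restrictSupport_mul_restrictSupport (s t : Set (σ →₀ ℕ)) :
    (restrictSupport R s * restrictSupport R t : Submodule R (MvPolynomial σ R)) =
      restrictSupport R (s + t) := by
  simp only [restrictSupport_eq_span, Submodule.span_mul_span]
  rw [← Set.image2_mul, Set.image2_image_left, Set.image2_image_right, ← Set.image2_add,
    Set.image_image2]
  simp only [monomial_mul, mul_one]

lemma finrank_restrictSupport {k : Type*} [Field k] (s : Set (σ →₀ ℕ)) :
    Module.finrank k (restrictSupport k s) = s.ncard := by
  rw [Module.finrank_eq_nat_card_basis (basisRestrictSupport k s), Nat.card_coe_set_eq]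

lemma exists_mem_support_apply_ne_zero_of_lt {J : Ideal (MvPolynomial σ R)} {m' m : ℕ}
    (hm : m' < m) (hJ : Submodule.restrictScalars R J ⊓ homogeneousSubmodule σ R m' ≠ ⊥)
    (i : σ) :
    ∃ f ∈ Submodule.restrictScalars R J ⊓ homogeneousSubmodule σ R m,
      ∃ β ∈ f.support, β i ≠ 0 := by
  obtain ⟨p, ⟨hpJ, hp⟩, hp0⟩ := (Submodule.ne_bot_iff _).mp hJ
  obtain ⟨α, hα⟩ := support_nonempty.mpr hp0
  have hmono : (monomial (Finsupp.single i (m - m')) (1 : R)).IsHomogeneous (m - m') :=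
    isHomogeneous_monomial _ (Finsupp.degree_single _ _)
  refine ⟨monomial (Finsupp.single i (m - m')) 1 * p, ⟨J.mul_mem_left _ hpJ, ?_⟩,
    Finsupp.single i (m - m') + α, ?_, by simp; omega⟩
  · have hprod := hmono.mul ((mem_homogeneousSubmodule _ _).mp hp)
    rwa [Nat.sub_add_cancel hm.le] at hprod
  · rw [mem_support_iff, coeff_monomial_mul, one_mul]
    exact mem_support_iff.mp hα

end MvPolynomial

/-- Corollary 5.2 (key step): if `J` is a graded ideal with `J_{m'} ≠ 0` for some `m' < m`
and `J_m` is spanned by an initial revlex segment, then `x_{n-1}^m ∈ J_m` and consequently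
`dim S_{m+l} − dim (S_l·J_m) = dim S_m − dim J_m` for all `l ≥ 0`. -/
theorem stmt6 {k : Type*} [Field k] (n m : ℕ) (hn : 1 ≤ n)
    (J : Ideal (MvPolynomial (Fin (n + 1)) k))
    (hlow : ∃ m' < m, (Submodule.restrictScalars k J ⊓
      homogeneousSubmodule (Fin (n + 1)) k m') ≠ ⊥)
    (W : Set (Fin (n + 1) →₀ ℕ)) (hW : IsRevLexSegment m W)
    (hspan : Submodule.restrictScalars k J ⊓ homogeneousSubmodule (Fin (n + 1)) k m =
      Submodule.span k ((fun ν => (monomial ν (1 : k) : MvPolynomial (Fin (n + 1)) k)) '' W)) :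
    (monomial (Finsupp.single (⟨n - 1, by omega⟩ : Fin (n + 1)) m) (1 : k) ∈
      Submodule.restrictScalars k J ⊓ homogeneousSubmodule (Fin (n + 1)) k m) ∧
    ∀ l : ℕ,
      Module.finrank k (homogeneousSubmodule (Fin (n + 1)) k (m + l)) -
        Module.finrank k ((homogeneousSubmodule (Fin (n + 1)) k l *
          (Submodule.restrictScalars k J ⊓ homogeneousSubmodule (Fin (n + 1)) k m) :
          Submodule k (MvPolynomial (Fin (n + 1)) k))) =
      Module.finrank k (homogeneousSubmodule (Fin (n + 1)) k m) -
        Module.finrank k ↥(Submodule.restrictScalars k J ⊓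
          homogeneousSubmodule (Fin (n + 1)) k m) := by
  rw [← restrictSupport_eq_span] at hspan
  obtain ⟨m', hm', hJm'⟩ := hlow
  obtain ⟨f, hf, β₀, hβ₀, hβ₀last⟩ := exists_mem_support_apply_ne_zero_of_lt hm' hJm' (Fin.last n)
  have hβ₀W : β₀ ∈ W := (hspan ▸ hf : f ∈ restrictSupport k W) hβ₀
  refine ⟨hspan ▸ (monomial_mem_restrictSupport k).mpr (Or.inl ?_), fun l => ?_⟩
  · refine hW.mem_of_lt_last (Finsupp.degree_single _ _) hβ₀W ?_
    rw [Finsupp.single_eq_of_ne (Fin.ne_of_val_ne (by simp; omega))]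
    omega
  · rw [hspan, homogeneousSubmodule_eq_restrictSupport, homogeneousSubmodule_eq_restrictSupport,
      homogeneousSubmodule_eq_restrictSupport, restrictSupport_mul_restrictSupport]
    simp only [finrank_restrictSupport]
    exact hW.ncard_degree_sub_ncard_degree_add hβ₀W hβ₀last l
end

section
/- Let E be a finite-dimensional vector space with totally ordered basis {e_α}, F ⊆ E a d-dimensional subspace, and ⃗α = (α(1) ≻ ... ≻ α(d)) a decreasing index tuple. Then the initial subspace in(F) equals the span of e_{α(1)},...,e_{α(d)} if and only if the Plücker coordinate p_{⃗α}(F) ≠ 0 and p_{⃗α'}(F) = 0 for all index tuples ⃗α' ≻ ⃗α in the lexicographic order on decreasing d-tuples. -/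
/-!
Let `L` be the set of leading indices (largest index of the support) of the nonzero vectors
of `F`, so that `in(F)` is spanned by the `e_α`, `α ∈ L`. Vectors with distinct leading indices
are independent, and restricting coordinates to `L` is injective on `F`, hence `#L = dim F = d`;
let `σ` enumerate `L` decreasingly. No nonzero vector of `F` vanishes on `L`, so `p_σ ≠ 0`.
If `t` is decreasing with `σ i₀ < t i₀`, the vectors of `F` with leading indices
`σ i₀, …, σ (d-1)` span a `(d - i₀)`-dimensional space on which the coordinates `t i`, `i ≤ i₀`,
vanish identically, so the remaining `d - 1 - i₀` coordinates have a common nonzero zero there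
and `p_t = 0`. Thus `σ` is the lexicographically largest decreasing tuple with nonzero
Plücker coordinate, and both sides of the equivalence say `s = σ`.
-/

/-- The initial subspace `in(F)` of a subspace `F ⊆ E` with respect to an ordered basis. -/
noncomputable def initialSubspace {k E ι : Type*} [Field k] [AddCommGroup E] [Module k E]
    [Fintype ι] [LinearOrder ι] (b : Module.Basis ι k E) (F : Submodule k E) : Submodule k E :=
  Submodule.span k {v | ∃ w ∈ F, ∃ h : (b.repr w).support.Nonempty,
    v = b ((b.repr w).support.max' h)}

/-- The Plücker coordinate `p_{⃗α}(F)` of the subspace spanned by a basis `w` of `F`,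
with respect to the index tuple `s`: the coefficient of `e_{s 0} ∧ ⋯ ∧ e_{s (d-1)}`
in `w 0 ∧ ⋯ ∧ w (d-1)`, computed as a determinant of coordinates. -/
noncomputable def pluecker {k E ι : Type*} [Field k] [AddCommGroup E] [Module k E]
    [Fintype ι] [LinearOrder ι] (b : Module.Basis ι k E) {d : ℕ} (w : Fin d → E)
    (s : Fin d → ι) : k :=
  Matrix.det (Matrix.of fun i j => b.repr (w j) (s i))

/-- `t ≻ s` in the lexicographic order on decreasing index tuples. -/
def TupleLexGt {ι : Type*} [LinearOrder ι] {d : ℕ} (t s : Fin d → ι) : Prop :=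
  ∃ i : Fin d, (∀ j : Fin d, j < i → t j = s j) ∧ s i < t i

open Finset Function Module Submodule

namespace Module.Basis

variable {k E ι : Type*} [Field k] [AddCommGroup E] [Module k E]

theorem span_image_inj (b : Basis ι k E) {s t : Set ι} :
    span k (b '' s) = span k (b '' t) ↔ s = t := by
  refine ⟨fun h => ?_, fun h => h ▸ rfl⟩
  ext α
  rw [← b.self_mem_span_image, h, b.self_mem_span_image]

variable [LinearOrder ι]

def IsLeadingIndex (b : Basis ι k E) (x : E) (α : ι) : Prop :=
  b.repr x α ≠ 0 ∧ ∀ β, b.repr x β ≠ 0 → β ≤ α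

variable {b : Basis ι k E}

theorem IsLeadingIndex.repr_eq_zero_of_lt {x : E} {α β : ι} (h : b.IsLeadingIndex x α)
    (hαβ : α < β) : b.repr x β = 0 :=
  by_contra fun hβ => (h.2 β hβ).not_gt hαβ

theorem isLeadingIndex_max' {x : E} (h : (b.repr x).support.Nonempty) :
    b.IsLeadingIndex x ((b.repr x).support.max' h) :=
  ⟨Finsupp.mem_support_iff.mp (max'_mem _ h),
    fun _ hβ => le_max' _ _ (Finsupp.mem_support_iff.mpr hβ)⟩

theorem IsLeadingIndex.exists_max'_eq {x : E} {α : ι} (h : b.IsLeadingIndex x α) :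
    ∃ hx : (b.repr x).support.Nonempty, (b.repr x).support.max' hx = α := by
  have hα : α ∈ (b.repr x).support := Finsupp.mem_support_iff.mpr h.1
  exact ⟨⟨α, hα⟩, le_antisymm (h.2 _ (Finsupp.mem_support_iff.mp (max'_mem _ _)))
    (le_max' _ _ hα)⟩

theorem exists_isLeadingIndex {x : E} (hx : x ≠ 0) : ∃ α, b.IsLeadingIndex x α :=
  ⟨_, isLeadingIndex_max' (Finsupp.support_nonempty_iff.mpr (by simpa using hx))⟩

theorem linearIndependent_of_isLeadingIndex {n : Type*} [Fintype n] {v : n → E} {m : n → ι}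
    (hm : Function.Injective m) (hv : ∀ i, b.IsLeadingIndex (v i) (m i)) :
    LinearIndependent k v := by
  classical
  refine Fintype.linearIndependent_iff.mpr fun g hg => ?_
  by_contra! hne
  obtain ⟨i₀, hi₀, hmax⟩ := (univ.filter fun i => g i ≠ 0).exists_max_image m
    (by simpa [Finset.Nonempty] using hne)
  have hcoord : b.repr (∑ i, g i • v i) (m i₀) = g i₀ * b.repr (v i₀) (m i₀) := by
    rw [map_sum, Finsupp.finsetSum_apply, sum_eq_single i₀]
    · simp
    · intro i _ hi
      by_cases hgi : g i = 0
      · simp [hgi]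
      · have hlt : m i < m i₀ := (hmax i (by simpa using hgi)).lt_of_ne (hm.ne hi)
        simp [(hv i).repr_eq_zero_of_lt hlt]
    · simp
  rw [hg, map_zero, Finsupp.zero_apply, eq_comm] at hcoord
  exact mul_ne_zero (by simpa using hi₀) (hv i₀).1 hcoord

variable [Fintype ι]

variable (b) in
open Classical in
noncomputable def leadingIndices (F : Submodule k E) : Finset ι :=
  univ.filter fun α => ∃ x ∈ F, b.IsLeadingIndex x α

variable {F : Submodule k E}

theorem mem_leadingIndices {α : ι} :
    α ∈ b.leadingIndices F ↔ ∃ x ∈ F, b.IsLeadingIndex x α := by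
  simp [leadingIndices]

theorem initialSubspace_eq_span_leadingIndices :
    initialSubspace b F = span k (b '' b.leadingIndices F) := by
  unfold initialSubspace
  congr 1
  ext y
  simp only [Set.mem_image, mem_coe, mem_leadingIndices]
  constructor
  · rintro ⟨x, hxF, hx, rfl⟩
    exact ⟨_, ⟨x, hxF, isLeadingIndex_max' hx⟩, rfl⟩
  · rintro ⟨α, ⟨x, hxF, hα⟩, rfl⟩
    obtain ⟨hx, hmax⟩ := hα.exists_max'_eq
    exact ⟨x, hxF, hx, by rw [hmax]⟩

theorem exists_mem_leadingIndices_repr_ne_zero {x : E} (hxF : x ∈ F) (hx : x ≠ 0) :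
    ∃ α ∈ b.leadingIndices F, b.repr x α ≠ 0 := by
  obtain ⟨α, hα⟩ := exists_isLeadingIndex (b := b) hx
  exact ⟨α, mem_leadingIndices.mpr ⟨x, hxF, hα⟩, hα.1⟩

theorem card_leadingIndices : #(b.leadingIndices F) = finrank k F := by
  have := b.finiteDimensional_of_finite
  apply le_antisymm
  · choose v hvF hv using fun α : b.leadingIndices F => mem_leadingIndices.mp α.2
    have hli : LinearIndependent k fun α => (⟨v α, hvF α⟩ : F) :=
      .of_comp F.subtype (linearIndependent_of_isLeadingIndex Subtype.val_injective hv)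
    simpa using hli.fintype_card_le_finrank
  · let restrict : F →ₗ[k] (b.leadingIndices F → k) :=
      (LinearMap.pi fun α : b.leadingIndices F => b.coord α).comp F.subtype
    have hinj : Function.Injective restrict := by
      refine (injective_iff_map_eq_zero restrict).mpr fun x hx => ?_
      by_contra hx0
      obtain ⟨α, hα, hne⟩ := exists_mem_leadingIndices_repr_ne_zero (b := b) x.2
        (by simpa using hx0)
      exact hne (by simpa [restrict] using congrFun hx ⟨α, hα⟩)
    simpa using LinearMap.finrank_le_finrank_of_injective hinj

theorem exists_ne_zero_repr_eq_zero_of_lt {d : ℕ} {σ t : Fin d → ι} (hσ : StrictAnti σ)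
    (hσF : ∀ i, σ i ∈ b.leadingIndices F) (ht : StrictAnti t) {i₀ : Fin d}
    (hi₀ : σ i₀ < t i₀) : ∃ x ∈ F, x ≠ 0 ∧ ∀ i, b.repr x (t i) = 0 := by
  choose u huF hu using fun i => mem_leadingIndices.mp (hσF i)
  let coords : E →ₗ[k] (Ioi i₀ → k) := LinearMap.pi fun i : Ioi i₀ => b.coord (t i)
  have hcard : finrank k (Ioi i₀ → k) < Fintype.card (Ici i₀) := by
    simp only [finrank_fintype_fun_eq_card, Fintype.card_coe, Fin.card_Ioi, Fin.card_Ici]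
    omega
  obtain ⟨g, hg, j, hj⟩ := Fintype.not_linearIndependent_iff.mp
    fun hli : LinearIndependent k (fun j : Ici i₀ => coords (u j)) =>
      hcard.not_ge hli.fintype_card_le_finrank
  refine ⟨∑ j : Ici i₀, g j • u j, sum_mem fun j _ => F.smul_mem _ (huF j), fun h0 => ?_,
    fun i => ?_⟩
  · have hli : LinearIndependent k fun j : Ici i₀ => u j :=
      linearIndependent_of_isLeadingIndex (hσ.injective.comp Subtype.val_injective) fun j => hu j
    exact hj (Fintype.linearIndependent_iff.mp hli g h0 j)
  rw [map_sum, Finsupp.finsetSum_apply]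
  rcases le_or_gt i i₀ with hi | hi
  · refine sum_eq_zero fun j _ => ?_
    have hlt : σ j < t i :=
      (hσ.antitone (mem_Ici.mp j.2)).trans_lt (hi₀.trans_le (ht.antitone hi))
    simp [(hu j).repr_eq_zero_of_lt hlt]
  · simpa [coords, map_sum] using congrFun hg ⟨i, mem_Ioi.mpr hi⟩

end Module.Basis

theorem Finset.exists_strictAnti_range_eq {α : Type*} [LinearOrder α] {s : Finset α} {d : ℕ}
    (h : #s = d) : ∃ σ : Fin d → α, StrictAnti σ ∧ Set.range σ = s :=
  ⟨s.orderEmbOfFin h ∘ Fin.rev, (s.orderEmbOfFin h).strictMono.comp_strictAnti Fin.rev_strictAnti,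
    by rw [Fin.rev_surjective.range_comp, range_orderEmbOfFin]⟩

section Pluecker

variable {k E ι : Type*} [Field k] [AddCommGroup E] [Module k E] [Fintype ι] [LinearOrder ι]
  (b : Basis ι k E) {d : ℕ} {w : Fin d → E}

theorem pluecker_eq_zero_iff (hw : LinearIndependent k w) (t : Fin d → ι) :
    pluecker b w t = 0 ↔ ∃ x ∈ span k (Set.range w), x ≠ 0 ∧ ∀ i, b.repr x (t i) = 0 := by
  classical
  have hmulVec (c : Fin d → k) :
      (Matrix.of fun i j => b.repr (w j) (t i)).mulVec c =
        fun i => b.repr (∑ j, c j • w j) (t i) := by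
    ext i
    simp [Matrix.mulVec, dotProduct, Finsupp.finsetSum_apply, mul_comm]
  have hne (c : Fin d → k) : ∑ j, c j • w j ≠ 0 ↔ c ≠ 0 := by
    simpa [Fintype.linearCombination_apply] using
      ((linearIndependent_iff_injective_fintypeLinearCombination ..).mp hw).ne_iff' (map_zero _)
  simp only [pluecker, ← Matrix.exists_mulVec_eq_zero_iff, mem_span_range_iff_exists_fun,
    exists_exists_eq_and, hmulVec, hne, funext_iff, Pi.zero_apply]

theorem pluecker_ne_zero_of_range_eq (hw : LinearIndependent k w) {σ : Fin d → ι}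
    (hσ : Set.range σ = b.leadingIndices (span k (Set.range w))) : pluecker b w σ ≠ 0 := by
  rw [Ne, pluecker_eq_zero_iff b hw]
  rintro ⟨x, hxF, hx, hσx⟩
  obtain ⟨α, hα, hne⟩ := b.exists_mem_leadingIndices_repr_ne_zero hxF hx
  obtain ⟨i, rfl⟩ : α ∈ Set.range σ := hσ ▸ hα
  exact hne (hσx i)

theorem pluecker_eq_zero_of_lt (hw : LinearIndependent k w) {σ t : Fin d → ι} (hσ : StrictAnti σ)
    (hσF : ∀ i, σ i ∈ b.leadingIndices (span k (Set.range w))) (ht : StrictAnti t) {i₀ : Fin d}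
    (hi₀ : σ i₀ < t i₀) : pluecker b w t = 0 :=
  (pluecker_eq_zero_iff b hw t).mpr (b.exists_ne_zero_repr_eq_zero_of_lt hσ hσF ht hi₀)

end Pluecker

/-- The initial subspace of `F` equals the coordinate subspace `span(e_{α(1)},…,e_{α(d)})`
iff the Plücker coordinate `p_{⃗α}(F)` is nonzero and all Plücker coordinates at
lexicographically larger decreasing tuples vanish. -/
theorem stmt10 {k E ι : Type*} [Field k] [AddCommGroup E] [Module k E]
    [Fintype ι] [LinearOrder ι] (b : Module.Basis ι k E) (F : Submodule k E) (d : ℕ)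
    (w : Fin d → E) (hw : LinearIndependent k w)
    (hspan : Submodule.span k (Set.range w) = F)
    (s : Fin d → ι) (hs : StrictAnti s) :
    initialSubspace b F = Submodule.span k (Set.range (b ∘ s)) ↔
      (pluecker b w s ≠ 0 ∧
        ∀ t : Fin d → ι, StrictAnti t → TupleLexGt t s → pluecker b w t = 0) := by
  subst hspan
  have hcard : #(b.leadingIndices (span k (Set.range w))) = d := by
    rw [b.card_leadingIndices, finrank_span_eq_card hw, Fintype.card_fin]
  obtain ⟨σ, hσ, hσL⟩ := exists_strictAnti_range_eq hcard
  have hσF (i : Fin d) : σ i ∈ b.leadingIndices (span k (Set.range w)) :=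
    Finset.mem_coe.mp (hσL ▸ Set.mem_range_self i)
  have hpσ : pluecker b w σ ≠ 0 := pluecker_ne_zero_of_range_eq b hw hσL
  have hvan {t : Fin d → ι} (ht : StrictAnti t) {i : Fin d} (hi : σ i < t i) :
      pluecker b w t = 0 := pluecker_eq_zero_of_lt b hw hσ hσF ht hi
  rw [b.initialSubspace_eq_span_leadingIndices, Set.range_comp, b.span_image_inj, ← hσL,
    hσ.range_inj hs]
  constructor
  · rintro rfl
    exact ⟨hpσ, fun t ht ⟨i, _, hi⟩ => hvan ht hi⟩
  · rintro ⟨hps, hgt⟩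
    rcases lt_trichotomy (toLex s) (toLex σ) with ⟨i, hij, hi⟩ | h | ⟨i, -, hi⟩
    · exact absurd (hgt σ hσ ⟨i, fun j hj => (hij j hj).symm, hi⟩) hpσ
    · exact (toLex.injective h).symm
    · exact absurd (hvan hs hi) hps
end

section
/- Let I be the principal ideal of k[x_0,...,x_n] (n ≥ 2) generated by a nonzero homogeneous polynomial f of degree d ≥ 1. Then the (n+1)-dimensional subspace I_{d+1} = span(x_0 f, x_1 f, ..., x_n f) of S_{d+1} has the property: every monomial appearing with nonzero coefficient in the wedge product x_0 f ∧ x_1 f ∧ ... ∧ x_n f ∈ Λ^{n+1} S_{d+1} is a wedge e_{μ_1} ∧ ... ∧ e_{μ_{n+1}} of degree d+1 monomials μ_1,...,μ_{n+1} whose product is divisible by x_i for every 0 ≤ i ≤ n. -/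
open MvPolynomial

theorem MvPolynomial.coeff_X_mul_eq_zero_of_apply_eq_zero {R σ : Type*} [CommSemiring R]
    {m : σ →₀ ℕ} {s : σ} (hs : m s = 0) (p : MvPolynomial σ R) : coeff m (X s * p) = 0 := by
  classical
  rw [coeff_X_mul', if_neg (Finsupp.notMem_support_iff.mpr hs)]

theorem stmt13_general {k : Type*} [Field k] (n : ℕ) (f : MvPolynomial (Fin (n + 1)) k)
    (μ : Fin (n + 1) → (Fin (n + 1) →₀ ℕ))
    (hdet : Matrix.det (Matrix.of fun i j : Fin (n + 1) =>
      coeff (μ i) ((X j : MvPolynomial (Fin (n + 1)) k) * f)) ≠ 0) :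
    ∀ i : Fin (n + 1), 0 < ∑ j, μ j i := by
  intro i
  by_contra! h
  have hμi : ∀ r, μ r i = 0 := fun r =>
    Finset.sum_eq_zero_iff.mp (Nat.le_zero.mp h) r (Finset.mem_univ r)
  exact hdet <| Matrix.det_eq_zero_of_column_eq_zero i fun r =>
    coeff_X_mul_eq_zero_of_apply_eq_zero (hμi r) f

/-- Section 5, hypersurface example: for a nonzero homogeneous `f` of degree `d ≥ 1` in
`k[x_0,…,x_n]`, `n ≥ 2`, every basis wedge `e_{μ_0} ∧ ⋯ ∧ e_{μ_n}` of degree `d+1`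
monomials occurring with nonzero coefficient in `x_0 f ∧ ⋯ ∧ x_n f` (the coefficient
being the determinant `det(coeff_{μ_i}(x_j f))`) has `μ_0 ⋯ μ_n` divisible by every
variable `x_i`. -/
theorem stmt13 {k : Type*} [Field k] [CharZero k] (n d : ℕ) (hn : 2 ≤ n) (hd : 1 ≤ d)
    (f : MvPolynomial (Fin (n + 1)) k) (hf : f.IsHomogeneous d) (hf0 : f ≠ 0)
    (μ : Fin (n + 1) → (Fin (n + 1) →₀ ℕ)) (hμ : ∀ j, ∑ i, μ j i = d + 1)
    (hdet : Matrix.det (Matrix.of fun i j : Fin (n + 1) =>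
      coeff (μ i) ((X j : MvPolynomial (Fin (n + 1)) k) * f)) ≠ 0) :
    ∀ i : Fin (n + 1), 0 < ∑ j, μ j i :=
  stmt13_general n f μ hdet
end
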